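/- Let G be a finite loopless multigraph and v₀ ∈ V(G). A multidegree D : V(G) → ℤ is concentrated at v₀ if and only if for every nonempty subset S ⊆ V(G)∖{v₀} there is some v ∈ S such that D(v) is strictly smaller than the number of edges from v to V(G)∖S. -/

import Mathlib

open scoped Classical

namespace LLS

variable {V E : Type*}

/-- `σ(e,v)`: `1` if `v` is the tail of `e`, `-1` if `v` is the head of `e`, `0` otherwise. -/
noncomputable def sigma (tail head : E → V) (e : E) (v : V) : ℤ :=
  if tail e = v then 1 else if head e = v then -1 else 0

/-- The endpoint of `e` other than `v` (for `e` adjacent to `v`). -/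
noncomputable def otherEnd (tail head : E → V) (e : E) (v : V) : V :=
  if tail e = v then head e else tail e

/-- The multigraph is loopless. -/
def Loopless (tail head : E → V) : Prop := ∀ e, tail e ≠ head e

/-- The multigraph is connected. -/
def MGConnected (tail head : E → V) : Prop :=
  ∀ u v : V, Relation.ReflTransGen
    (fun a b => ∃ e, (tail e = a ∧ head e = b) ∨ (tail e = b ∧ head e = a)) u v

/-- An admissible multidegree on `(Γ, 𝐧)`: a function `V(Γ) → ℤ` together with an
element `μ(e) ∈ ℤ/𝐧(e)ℤ` for each edge `e`. -/
structure AdmMD (V E : Type*) (n : E → ℕ) where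
  wV : V → ℤ
  mu : ∀ e : E, ZMod (n e)

section FinGraph

variable [Fintype V] [Fintype E] [DecidableEq V] [DecidableEq E]

/-- The twist of an admissible multidegree at a vertex `v`. -/
noncomputable def twist (tail head : E → V) (n : E → ℕ) (w : AdmMD V E n) (v : V) :
    AdmMD V E n where
  wV u := w.wV u
    - (if u = v then ((Finset.univ.filter fun e : E =>
        sigma tail head e v ≠ 0 ∧ w.mu e = 0).card : ℤ) else 0)
    + ((Finset.univ.filter fun e : E => sigma tail head e v ≠ 0 ∧
        w.mu e + (sigma tail head e v : ZMod (n e)) = 0 ∧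
        otherEnd tail head e v = u).card : ℤ)
  mu e := w.mu e + (sigma tail head e v : ZMod (n e))

/-- The negative twist of an admissible multidegree at a vertex `v`
(the inverse of `twist`). -/
noncomputable def negTwist (tail head : E → V) (n : E → ℕ) (w : AdmMD V E n) (v : V) :
    AdmMD V E n where
  wV u := w.wV u
    + (if u = v then ((Finset.univ.filter fun e : E => sigma tail head e v ≠ 0 ∧
        w.mu e - (sigma tail head e v : ZMod (n e)) = 0).card : ℤ) else 0)
    - ((Finset.univ.filter fun e : E => sigma tail head e v ≠ 0 ∧
        w.mu e = 0 ∧ otherEnd tail head e v = u).card : ℤ)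
  mu e := w.mu e - (sigma tail head e v : ZMod (n e))

/-- An admissible multidegree is concentrated at `v` if there is an ordering of all
vertices starting with `v` such that composing the negative twists at all previous
vertices makes the multidegree negative at each subsequent vertex. -/
def Concentrated (tail head : E → V) (n : E → ℕ) (w : AdmMD V E n) (v : V) : Prop :=
  ∃ l : List V, l.Nodup ∧ (∀ x : V, x ∈ l) ∧ l.head? = some v ∧
    ∀ (i : ℕ) (h : i < l.length), 0 < i →
      (((l.take i).foldl (negTwist tail head n) w).wV (l.get ⟨i, h⟩)) < 0

/-- `w` is obtained from `w₀` by a finite sequence of twists, i.e. `w ∈ V(G(w₀))`. -/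
def TwistSeq (tail head : E → V) (n : E → ℕ) (w₀ w : AdmMD V E n) : Prop :=
  ∃ l : List V, l.foldl (twist tail head n) w₀ = w

/-- `l` records the successive twist vertices of a minimal path from `w` to `w'`
in `G(w₀)`. -/
def IsMinPath (tail head : E → V) (n : E → ℕ) (w w' : AdmMD V E n) (l : List V) : Prop :=
  l.foldl (twist tail head n) w = w' ∧
    ∀ l' : List V, l'.foldl (twist tail head n) w = w' → l.length ≤ l'.length

/-- The membership condition describing the subgraph `Ḡ(w₀)` of `G(w₀)`:
no minimal path from `w` to `w_v` involves twisting at `v`. -/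
def InBarG (tail head : E → V) (n : E → ℕ) (w₀ : AdmMD V E n) (wv : V → AdmMD V E n)
    (w : AdmMD V E n) : Prop :=
  TwistSeq tail head n w₀ w ∧
    ∀ (v : V) (l : List V), IsMinPath tail head n w (wv v) l → v ∉ l

/-- Edges joining `v` and `u`. -/
noncomputable def edgesBetween (tail head : E → V) (v u : V) : Finset E :=
  Finset.univ.filter fun e => (tail e = v ∧ head e = u) ∨ (head e = v ∧ tail e = u)

/-- Edges adjacent to `v`. -/
noncomputable def edgesAdj (tail head : E → V) (v : V) : Finset E :=
  Finset.univ.filter fun e => tail e = v ∨ head e = v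

/-- The change of a divisor effected by a single chip-firing move at `v`. -/
noncomputable def fireDelta (tail head : E → V) (v : V) : V → ℤ := fun u =>
  ((edgesBetween tail head v u).card : ℤ)
    - (if u = v then ((edgesAdj tail head v).card : ℤ) else 0)

/-- A chip-firing move (twist) at `v`. -/
noncomputable def chipFire (tail head : E → V) (D : V → ℤ) (v : V) : V → ℤ :=
  fun u => D u + fireDelta tail head v u

/-- The inverse of a chip-firing move at `v`. -/
noncomputable def negChipFire (tail head : E → V) (D : V → ℤ) (v : V) : V → ℤ :=
  fun u => D u - fireDelta tail head v u

/-- A divisor (multidegree) on a graph is concentrated at `v`. -/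
def ConcentratedDiv (tail head : E → V) (D : V → ℤ) (v : V) : Prop :=
  ∃ l : List V, l.Nodup ∧ (∀ x : V, x ∈ l) ∧ l.head? = some v ∧
    ∀ (i : ℕ) (h : i < l.length), 0 < i →
      (((l.take i).foldl (negChipFire tail head) D) (l.get ⟨i, h⟩)) < 0

/-- A divisor on a graph is `v₀`-reduced. -/
def VReduced (tail head : E → V) (D : V → ℤ) (v₀ : V) : Prop :=
  (∀ u, u ≠ v₀ → 0 ≤ D u) ∧
    ∀ S : Finset V, S.Nonempty → v₀ ∉ S →
      ∃ v ∈ S, D v < ((Finset.univ.filter fun e : E =>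
        (tail e = v ∧ head e ∉ S) ∨ (head e = v ∧ tail e ∉ S)).card : ℤ)

/-- The function `D_{w,v}` on edges of `Γ` determined by a path `l` from `w` to `w_v`. -/
noncomputable def DFun (tail head : E → V) (n : E → ℕ) (w : AdmMD V E n) (l : List V)
    (v : V) (et : E) : ℤ :=
  (((Finset.univ : Finset (Fin l.length)).filter fun j =>
      l.get j = otherEnd tail head et v ∧
        ((l.take (j.val + 1)).foldl (twist tail head n) w).mu et = 0).card : ℤ)
  - (((Finset.univ : Finset (Fin l.length)).filter fun j =>
      l.get j = v ∧ ((l.take j.val).foldl (twist tail head n) w).mu et = 0).card : ℤ)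

end FinGraph

/-- The tail map of the subdivided graph `Γ̃`: the edge `e` of `Γ` is subdivided into
`𝐧(e)` edges `(e, j)`, `j = 0, …, 𝐧(e) - 1`, numbered from the tail of `e`; the new
vertices over `e` are `(e, i)`, `i = 0, …, 𝐧(e) - 2`, with `(e, i)` being the
`(i+1)`-st new vertex from the tail of `e`. -/
def tailT (tail head : E → V) (n : E → ℕ) :
    (Σ e : E, Fin (n e)) → V ⊕ Σ e : E, Fin (n e - 1) := fun p =>
  if h : p.2.val = 0 then Sum.inl (tail p.1)
  else Sum.inr ⟨p.1, ⟨p.2.val - 1, by have := p.2.isLt; omega⟩⟩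

/-- The head map of the subdivided graph `Γ̃`. -/
def headT (tail head : E → V) (n : E → ℕ) :
    (Σ e : E, Fin (n e)) → V ⊕ Σ e : E, Fin (n e - 1) := fun p =>
  if h : p.2.val = n p.1 - 1 then Sum.inl (head p.1)
  else Sum.inr ⟨p.1, ⟨p.2.val, by have := p.2.isLt; omega⟩⟩

/-- The multidegree on the subdivided graph `Γ̃` induced by an admissible multidegree:
it agrees with `w` on old vertices, is `1` on the `μ(e)`-th new vertex over `e`
when `μ(e) ≠ 0`, and is `0` on all other new vertices. -/
noncomputable def inducedMD (n : E → ℕ) (w : AdmMD V E n) :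
    (V ⊕ Σ e : E, Fin (n e - 1)) → ℤ
  | Sum.inl v => w.wV v
  | Sum.inr ⟨e, i⟩ => if (w.mu e).val = i.val + 1 then 1 else 0

/-- The simple graph `Γ̄` associated to the multigraph `Γ`: same vertices, one edge
between each pair of adjacent vertices. -/
def barGraph (tail head : E → V) : SimpleGraph V where
  Adj u v := u ≠ v ∧ ∃ e, (tail e = u ∧ head e = v) ∨ (tail e = v ∧ head e = u)
  symm := by
    constructor
    intro u v h
    exact ⟨h.1.symm, h.2.imp fun e he => he.symm⟩
  loopless := ⟨fun u h => h.1 rfl⟩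

/-! A negative twist at `u` takes from every other vertex one chip per edge joining it to `u`.
So along an ordering `v₀ = u₀, u₁, …` the vertex `uᵢ` is negative after the negative twists at
its predecessors exactly when `D uᵢ` is smaller than the number of edges from `uᵢ` to
`{u₀, …, uᵢ₋₁}`. Given such an ordering and `S`, the first vertex of the ordering in `S` has all
its predecessors outside `S`, which gives the required `v`. Conversely, the condition on the sets
`S` lets one build the ordering greedily: among the vertices `S` not yet listed, pick one with
fewer chips than edges to the listed ones `V ∖ S`. -/

lemma _root_.List.Nodup.getElem_notMem_take {α : Type*} {l : List α} (hl : l.Nodup) {i : ℕ}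
    (hi : i < l.length) : l[i] ∉ l.take i :=
  fun hmem => List.disjoint_take_drop hl le_rfl hmem
    (List.mem_iff_getElem.2 ⟨0, by simpa using hi, by simp⟩)

lemma _root_.Finset.exists_greedy_enumeration {α : Type*} [DecidableEq α]
    (P : α → Finset α → Prop) (S₀ : Finset α)
    (H : ∀ S ⊆ S₀, S.Nonempty → ∃ v ∈ S, P v S) :
    ∃ r : List α, r.Nodup ∧ r.toFinset = S₀ ∧
      ∀ (i : ℕ) (h : i < r.length), P r[i] (S₀ \ (r.take i).toFinset) := by
  induction S₀ using Finset.strongInduction with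
  | H S₀ ih =>
    obtain rfl | hne := S₀.eq_empty_or_nonempty
    · exact ⟨[], List.nodup_nil, rfl, fun i h => absurd h (Nat.not_lt_zero i)⟩
    obtain ⟨v, hv, hPv⟩ := H S₀ subset_rfl hne
    obtain ⟨r, hr, hrS, hPr⟩ := ih (S₀.erase v) (Finset.erase_ssubset hv)
      fun S hS => H S (hS.trans (Finset.erase_subset v S₀))
    refine ⟨v :: r, List.nodup_cons.2 ⟨by simp [← List.mem_toFinset, hrS], hr⟩,
      by simp [hrS, Finset.insert_erase hv], ?_⟩
    rintro (_ | i) h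
    · simpa using hPv
    · have hsdiff : S₀ \ ((v :: r).take (i + 1)).toFinset = S₀.erase v \ (r.take i).toFinset := by
        ext x
        simp only [List.take_succ_cons, List.toFinset_cons, Finset.mem_sdiff, Finset.mem_insert,
          Finset.mem_erase]
        tauto
      rw [hsdiff]
      exact hPr i (by simpa using h)

section ChipFiring

variable {V E : Type*} [Fintype E] [DecidableEq V] (tail head : E → V)

noncomputable def edgesInto (v : V) (T : Finset V) : Finset E :=
  Finset.univ.filter fun e => (tail e = v ∧ head e ∈ T) ∨ (head e = v ∧ tail e ∈ T)

lemma edgesInto_mono (v : V) {T T' : Finset V} (h : T ⊆ T') :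
    edgesInto tail head v T ⊆ edgesInto tail head v T' := by
  intro e
  simp only [edgesInto, Finset.mem_filter, Finset.mem_univ, true_and]
  rintro (⟨h₁, h₂⟩ | ⟨h₁, h₂⟩)
  exacts [Or.inl ⟨h₁, h h₂⟩, Or.inr ⟨h₁, h h₂⟩]

lemma biUnion_edgesBetween (v : V) (T : Finset V) :
    T.biUnion (fun u => edgesBetween tail head u v) = edgesInto tail head v T := by
  ext e
  simp only [edgesBetween, edgesInto, Finset.mem_biUnion, Finset.mem_filter, Finset.mem_univ,
    true_and]
  constructor
  · rintro ⟨u, hu, ⟨rfl, rfl⟩ | ⟨rfl, rfl⟩⟩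
    exacts [Or.inr ⟨rfl, hu⟩, Or.inl ⟨rfl, hu⟩]
  · rintro (⟨rfl, h⟩ | ⟨rfl, h⟩)
    exacts [⟨head e, h, Or.inr ⟨rfl, rfl⟩⟩, ⟨tail e, h, Or.inl ⟨rfl, rfl⟩⟩]

lemma card_edgesInto (v : V) (T : Finset V) :
    (edgesInto tail head v T).card = ∑ u ∈ T, (edgesBetween tail head u v).card := by
  rw [← biUnion_edgesBetween, Finset.card_biUnion]
  intro u _ u' _ huu'
  refine Finset.disjoint_left.2 fun e he he' => huu' ?_
  simp only [edgesBetween, Finset.mem_filter, Finset.mem_univ, true_and] at he he'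
  grind

lemma foldl_negChipFire_apply (l : List V) (D : V → ℤ) (v : V) :
    l.foldl (negChipFire tail head) D v = D v - (l.map fun u => fireDelta tail head u v).sum := by
  induction l generalizing D with
  | nil => simp
  | cons u l ih =>
    simp only [List.foldl_cons, ih, List.map_cons, List.sum_cons, negChipFire]
    ring

lemma foldl_negChipFire_apply_of_notMem {l : List V} (hl : l.Nodup) (D : V → ℤ) {v : V}
    (hv : v ∉ l) :
    l.foldl (negChipFire tail head) D v = D v - (edgesInto tail head v l.toFinset).card := by
  have hfire : ∀ u ∈ l, fireDelta tail head u v = (edgesBetween tail head u v).card := by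
    intro u hu
    simp [fireDelta, show v ≠ u by rintro rfl; exact hv hu]
  rw [foldl_negChipFire_apply, card_edgesInto, Nat.cast_sum, List.sum_toFinset _ hl,
    List.map_congr_left hfire]

def IsConcentratingOrder (D : V → ℤ) (v₀ : V) (l : List V) : Prop :=
  l.Nodup ∧ (∀ x : V, x ∈ l) ∧ l.head? = some v₀ ∧
    ∀ (i : ℕ) (h : i < l.length), 0 < i →
      D l[i] < (edgesInto tail head l[i] (l.take i).toFinset).card

lemma concentratedDiv_iff_exists_isConcentratingOrder (D : V → ℤ) (v₀ : V) :
    ConcentratedDiv tail head D v₀ ↔ ∃ l, IsConcentratingOrder tail head D v₀ l := by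
  refine exists_congr fun l => and_congr_right fun hl => and_congr_right fun _ =>
    and_congr_right fun _ => forall₂_congr fun i hi => imp_congr_right fun _ => ?_
  rw [List.get_eq_getElem, foldl_negChipFire_apply_of_notMem tail head (hl.sublist
    (List.take_sublist i l)) D (hl.getElem_notMem_take hi), sub_neg]

variable [Fintype V] {D : V → ℤ} {v₀ : V}

lemma IsConcentratingOrder.exists_lt_card_edgesInto_compl {l : List V}
    (hl : IsConcentratingOrder tail head D v₀ l) {S : Finset V} (hS : S.Nonempty) (hv₀ : v₀ ∉ S) :
    ∃ v ∈ S, D v < (edgesInto tail head v Sᶜ).card := by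
  obtain ⟨-, hall, hhead, hlt⟩ := hl
  obtain ⟨x, hx⟩ := hS
  set i := l.findIdx (· ∈ S)
  have hi : i < l.length := List.findIdx_lt_length_of_exists ⟨x, hall x, by simpa using hx⟩
  have hmem : l[i] ∈ S := by simpa using List.findIdx_getElem (w := hi)
  have hpos : 0 < i := by
    refine Nat.pos_of_ne_zero fun h0 => hv₀ ?_
    rw [List.head?_eq_getElem?, List.getElem?_eq_getElem (h0 ▸ hi)] at hhead
    simpa [← Option.some_injective _ hhead, h0] using hmem
  have hsub : (l.take i).toFinset ⊆ Sᶜ := by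
    intro y hy
    obtain ⟨j, hj, rfl⟩ := List.mem_take_iff_getElem.1 (List.mem_toFinset.1 hy)
    simpa using List.not_of_lt_findIdx (lt_of_lt_of_le hj (min_le_left _ _))
  exact ⟨l[i], hmem, (hlt i hi hpos).trans_le
    (Nat.cast_le.2 (Finset.card_le_card (edgesInto_mono tail head _ hsub)))⟩

lemma exists_isConcentratingOrder
    (H : ∀ S : Finset V, S.Nonempty → v₀ ∉ S → ∃ v ∈ S, D v < (edgesInto tail head v Sᶜ).card) :
    ∃ l, IsConcentratingOrder tail head D v₀ l := by
  obtain ⟨r, hr, hrS, hPr⟩ := Finset.exists_greedy_enumeration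
    (fun v S => D v < (edgesInto tail head v Sᶜ).card) (Finset.univ.erase v₀)
    fun S hS hne => H S hne fun h => by simpa using hS h
  have hv₀r : v₀ ∉ r := by simp [← List.mem_toFinset, hrS]
  refine ⟨v₀ :: r, List.nodup_cons.2 ⟨hv₀r, hr⟩, fun x => ?_, rfl, ?_⟩
  · by_cases hx : x = v₀
    · simp [hx]
    · exact List.mem_cons_of_mem _ (List.mem_toFinset.1 (by simp [hrS, hx]))
  · rintro (_ | i) h hpos
    · exact absurd hpos (lt_irrefl 0)
    have hcompl : (Finset.univ.erase v₀ \ (r.take i).toFinset)ᶜ =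
        ((v₀ :: r).take (i + 1)).toFinset := by
      ext x
      by_cases hx : x = v₀ <;> simp [hx]
    rw [← hcompl]
    exact hPr i (by simpa using h)

end ChipFiring

theorem statement_3_general {V E : Type*} [Fintype V] [Fintype E] [DecidableEq V]
    (tail head : E → V)
    (D : V → ℤ) (v₀ : V) :
    ConcentratedDiv tail head D v₀ ↔
      ∀ S : Finset V, S.Nonempty → v₀ ∉ S →
        ∃ v ∈ S, D v < ((Finset.univ.filter fun e : E =>
          (tail e = v ∧ head e ∉ S) ∨ (head e = v ∧ tail e ∉ S)).card : ℤ) := by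
  have hfilter : ∀ (v : V) (S : Finset V), (Finset.univ.filter fun e : E =>
      (tail e = v ∧ head e ∉ S) ∨ (head e = v ∧ tail e ∉ S)) = edgesInto tail head v Sᶜ := by
    intro v S
    ext e
    simp [edgesInto]
  simp only [hfilter, concentratedDiv_iff_exists_isConcentratingOrder]
  exact ⟨fun ⟨_, hl⟩ _ => hl.exists_lt_card_edgesInto_compl tail head,
    exists_isConcentratingOrder tail head⟩

/-- a multidegree `D` on a finite loopless multigraph is concentrated at
`v₀` iff for every nonempty `S ⊆ V∖{v₀}` there is `v ∈ S` with `D v` strictly smaller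
than the number of edges from `v` to `V∖S`. -/
theorem statement_3 {V E : Type*} [Fintype V] [Fintype E] [DecidableEq V] [DecidableEq E]
    (tail head : E → V) (hloop : Loopless tail head)
    (D : V → ℤ) (v₀ : V) :
    ConcentratedDiv tail head D v₀ ↔
      ∀ S : Finset V, S.Nonempty → v₀ ∉ S →
        ∃ v ∈ S, D v < ((Finset.univ.filter fun e : E =>
          (tail e = v ∧ head e ∉ S) ∨ (head e = v ∧ tail e ∉ S)).card : ℤ) :=
  statement_3_general tail head D v₀

end LLS
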